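/- Let d ≥ 1 and J ≥ 1, let x_1, …, x_J ∈ ℝ^d, let μ̂ ∈ ℝ^d and Σ̂ ∈ ℝ^{d×d} symmetric positive definite, and let Θ = {θ ∈ ℝ^d : x_j^⊤θ ≥ 0 for all j ∈ [J]}. For r ≥ 0 define the ellipsoid E_{(μ̂,Σ̂)}(r) = {Σ̂^{1/2} u + μ̂ : u ∈ ℝ^d, ‖u‖₂ ≤ r} and the validity value Validity({x_j}, μ̂, Σ̂) = max{r : r ≥ 0, E_{(μ̂,Σ̂)}(r) ⊆ Θ}. If μ̂ ∈ Θ (and each x_j ≠ 0), then Validity({x_j}, μ̂, Σ̂) = min_{j ∈ [J]} (μ̂^⊤ x_j) / ‖Σ̂^{1/2} x_j‖₂. -/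

import Mathlib

/-!
Since `Σ̂^{1/2}` is symmetric, `x_jᵀ(Σ̂^{1/2} u + μ̂) = (Σ̂^{1/2} x_j)ᵀ u + μ̂ᵀ x_j`. By Cauchy–Schwarz
its minimum over the ball `‖u‖₂ ≤ r` is `μ̂ᵀ x_j - r ‖Σ̂^{1/2} x_j‖₂`, attained at a negative
multiple of `Σ̂^{1/2} x_j`. Hence the admissible radii form the interval
`[0, min_j μ̂ᵀ x_j / ‖Σ̂^{1/2} x_j‖₂]`, whose denominators are positive because
`‖Σ̂^{1/2} x‖₂² = xᵀ Σ̂ x`.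
-/

open MeasureTheory Matrix Classical

noncomputable section

/-- Positive semidefinite square root of a matrix (junk value `0` if not PSD). -/
noncomputable def matSqrt {d : ℕ} (A : Matrix (Fin d) (Fin d) ℝ) : Matrix (Fin d) (Fin d) ℝ :=
  if h : A.PosSemidef then
    (h.1.eigenvectorUnitary : Matrix (Fin d) (Fin d) ℝ) * diagonal (Real.sqrt ∘ h.1.eigenvalues) *
      star (h.1.eigenvectorUnitary : Matrix (Fin d) (Fin d) ℝ)
  else 0

/-- Euclidean norm on `Fin d → ℝ`. -/
noncomputable def euclNorm {d : ℕ} (v : Fin d → ℝ) : ℝ := Real.sqrt (∑ i, (v i) ^ 2)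

/-- Set of favorable parameters `Θ({x_j}) = {θ : x_jᵀθ ≥ 0 ∀ j}`. -/
def favSet {d J : ℕ} (x : Fin J → Fin d → ℝ) : Set (Fin d → ℝ) :=
  { θ | ∀ j, 0 ≤ x j ⬝ᵥ θ }

/-- The ellipsoid `E_{(μ̂,Σ̂)}(r) = {Σ̂^{1/2} u + μ̂ : ‖u‖₂ ≤ r}`. -/
def ellipsoid {d : ℕ} (μhat : Fin d → ℝ) (Shat : Matrix (Fin d) (Fin d) ℝ) (r : ℝ) :
    Set (Fin d → ℝ) :=
  { θ | ∃ u : Fin d → ℝ, euclNorm u ≤ r ∧ θ = matSqrt Shat *ᵥ u + μhat }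

/-- The validity value: the largest radius `r ≥ 0` with `E_{(μ̂,Σ̂)}(r) ⊆ Θ({x_j})`. -/
noncomputable def validityVal {d J : ℕ} (x : Fin J → Fin d → ℝ) (μhat : Fin d → ℝ)
    (Shat : Matrix (Fin d) (Fin d) ℝ) : ℝ :=
  sSup { r : ℝ | 0 ≤ r ∧ ellipsoid μhat Shat r ⊆ favSet x }

section HalfSpace

variable {E : Type*} [NormedAddCommGroup E] [InnerProductSpace ℝ E]

theorem forall_norm_le_inner_add_nonneg_iff {w : E} {r c : ℝ} (hr : 0 ≤ r) :
    (∀ u : E, ‖u‖ ≤ r → 0 ≤ inner ℝ w u + c) ↔ r * ‖w‖ ≤ c := by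
  constructor
  · intro h
    obtain rfl | hw := eq_or_ne w 0
    · simpa using h 0 (by simpa using hr)
    have hw_norm : ‖w‖ ≠ 0 := norm_ne_zero_iff.mpr hw
    have hnorm : ‖-(r / ‖w‖) • w‖ = r := by
      rw [norm_smul, norm_neg, Real.norm_of_nonneg (by positivity), div_mul_cancel₀ r hw_norm]
    have hinner : inner ℝ w (-(r / ‖w‖) • w) = -(r * ‖w‖) := by
      rw [inner_smul_right, real_inner_self_eq_norm_sq]
      field_simp
    linarith [hinner ▸ h _ hnorm.le]
  · intro h u hu
    have hcs := neg_le_of_abs_le (abs_real_inner_le_norm w u)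
    nlinarith [norm_nonneg w]

end HalfSpace

variable {d : ℕ}

lemma euclNorm_eq_norm (v : Fin d → ℝ) : euclNorm v = ‖WithLp.toLp 2 v‖ := by
  simp [euclNorm, EuclideanSpace.norm_eq]

lemma dotProduct_eq_inner (v u : Fin d → ℝ) :
    v ⬝ᵥ u = inner ℝ (WithLp.toLp 2 v) (WithLp.toLp 2 u) := by
  simp [EuclideanSpace.inner_eq_star_dotProduct, dotProduct_comm]

lemma matSqrt_eq_cfc {A : Matrix (Fin d) (Fin d) ℝ} (hA : A.PosSemidef) :
    matSqrt A = cfc Real.sqrt A := by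
  rw [matSqrt, dif_pos hA, hA.1.cfc_eq, IsHermitian.cfc, Unitary.conjStarAlgAut_apply,
    RCLike.ofReal_real_eq_id, Function.id_comp]

lemma matSqrt_mul_self {A : Matrix (Fin d) (Fin d) ℝ} (hA : A.PosSemidef) :
    matSqrt A * matSqrt A = A := by
  have hspec : (spectrum ℝ A).EqOn (fun t => √t * √t) id := by
    rw [hA.1.spectrum_real_eq_range_eigenvalues]
    rintro - ⟨i, rfl⟩
    exact Real.mul_self_sqrt (hA.eigenvalues_nonneg i)
  rw [matSqrt_eq_cfc hA, ← cfc_mul .., cfc_congr hspec]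
  exact cfc_id ℝ A hA.1

lemma transpose_matSqrt {A : Matrix (Fin d) (Fin d) ℝ} (hA : A.PosSemidef) :
    (matSqrt A)ᵀ = matSqrt A := by
  rw [matSqrt_eq_cfc hA, ← conjTranspose_eq_transpose_of_trivial]
  exact cfc_predicate Real.sqrt A

lemma dotProduct_matSqrt_mulVec {A : Matrix (Fin d) (Fin d) ℝ} (hA : A.PosSemidef)
    (v u : Fin d → ℝ) : v ⬝ᵥ (matSqrt A *ᵥ u) = (matSqrt A *ᵥ v) ⬝ᵥ u := by
  rw [dotProduct_mulVec, ← vecMul_transpose, transpose_matSqrt hA]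

lemma euclNorm_matSqrt_mulVec {A : Matrix (Fin d) (Fin d) ℝ} (hA : A.PosSemidef)
    (v : Fin d → ℝ) : euclNorm (matSqrt A *ᵥ v) = √(v ⬝ᵥ (A *ᵥ v)) := by
  rw [euclNorm_eq_norm, norm_eq_sqrt_real_inner, ← dotProduct_eq_inner,
    ← dotProduct_matSqrt_mulVec hA, mulVec_mulVec, matSqrt_mul_self hA]

lemma ellipsoid_subset_favSet_iff {J : ℕ} {x : Fin J → Fin d → ℝ} {μ : Fin d → ℝ}
    {A : Matrix (Fin d) (Fin d) ℝ} (hA : A.PosSemidef) {r : ℝ} (hr : 0 ≤ r) :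
    ellipsoid μ A r ⊆ favSet x ↔ ∀ j, r * euclNorm (matSqrt A *ᵥ x j) ≤ μ ⬝ᵥ x j := by
  have hsubset : ellipsoid μ A r ⊆ favSet x ↔
      ∀ j, ∀ u, euclNorm u ≤ r → 0 ≤ x j ⬝ᵥ (matSqrt A *ᵥ u + μ) := by
    simp only [ellipsoid, favSet, Set.ofPred_subset_ofPred, forall_exists_index, and_imp]
    exact ⟨fun h j u hu => h _ u hu rfl j, by rintro h - u hu rfl j; exact h j u hu⟩
  rw [hsubset]
  refine forall_congr' fun j => ?_
  rw [euclNorm_eq_norm (matSqrt A *ᵥ x j), ← forall_norm_le_inner_add_nonneg_iff hr,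
    ← (WithLp.equiv 2 (Fin d → ℝ)).symm.forall_congr_right]
  simp only [dotProduct_add, dotProduct_matSqrt_mulVec hA, dotProduct_comm (x j) μ,
    euclNorm_eq_norm, dotProduct_eq_inner, WithLp.equiv_symm_apply]

theorem validity_value_general {d J : ℕ} (hJ : 1 ≤ J) (x : Fin J → Fin d → ℝ)
    (hx : ∀ j, x j ≠ 0) (μhat : Fin d → ℝ) (Shat : Matrix (Fin d) (Fin d) ℝ)
    (hShat : Shat.PosDef) (hμ : μhat ∈ favSet x) :
    validityVal x μhat Shat = ⨅ j, (μhat ⬝ᵥ x j) / euclNorm (matSqrt Shat *ᵥ x j) := by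
  have : Nonempty (Fin J) := ⟨⟨0, hJ⟩⟩
  have hnorm_pos (j : Fin J) : 0 < euclNorm (matSqrt Shat *ᵥ x j) := by
    rw [euclNorm_matSqrt_mulVec hShat.posSemidef]
    exact Real.sqrt_pos.mpr (hShat.dotProduct_mulVec_pos (hx j))
  have hinf_nonneg : 0 ≤ ⨅ j, (μhat ⬝ᵥ x j) / euclNorm (matSqrt Shat *ᵥ x j) :=
    le_ciInf fun j => div_nonneg (dotProduct_comm μhat (x j) ▸ hμ j) (hnorm_pos j).le
  have hradii : { r : ℝ | 0 ≤ r ∧ ellipsoid μhat Shat r ⊆ favSet x } =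
      Set.Icc 0 (⨅ j, (μhat ⬝ᵥ x j) / euclNorm (matSqrt Shat *ᵥ x j)) := by
    ext r
    refine and_congr_right fun hr => ?_
    rw [ellipsoid_subset_favSet_iff hShat.posSemidef hr,
      le_ciInf_iff (Set.finite_range _).bddBelow]
    exact forall_congr' fun j => (le_div_iff₀ (hnorm_pos j)).symm
  rw [validityVal, hradii, csSup_Icc hinf_nonneg]

/-- **Lemma 1 (Validity value).** If `μ̂ ∈ Θ({x_j})` (and each `x_j ≠ 0`), then the
validity value equals `min_j μ̂ᵀx_j / ‖Σ̂^{1/2} x_j‖₂`. -/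
theorem validity_value {d J : ℕ} (hd : 1 ≤ d) (hJ : 1 ≤ J) (x : Fin J → Fin d → ℝ)
    (hx : ∀ j, x j ≠ 0) (μhat : Fin d → ℝ) (Shat : Matrix (Fin d) (Fin d) ℝ)
    (hShat : Shat.PosDef) (hμ : μhat ∈ favSet x) :
    validityVal x μhat Shat = ⨅ j, (μhat ⬝ᵥ x j) / euclNorm (matSqrt Shat *ᵥ x j) :=
  validity_value_general hJ x hx μhat Shat hShat hμ

end
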